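/- arXiv:2209.09856 — 2 statements merged into one kernel-verified Lean document; each statement's English description precedes it below -/
import Mathlib

section
/- Let Ω be a probability space and N, M ≥ 1. Let h̃₀ : Ω → ℂ^N, h̃₂ : Ω → ℂ^M and H̃₁ : Ω → ℂ^{M×N} be random arrays whose N + M + MN scalar entries form a mutually independent family of standard complex random variables. Let h̄₀ ∈ ℂ^N and h̄₂ ∈ ℂ^M with ‖h̄₂‖² = M, let H̄₁ = a bᴴ be a rank-one matrix with a ∈ ℂ^M, b ∈ ℂ^N and ‖a‖² = M, and let Ξ = diag(ξ₁,…,ξ_M) with |ξ_m| = 1 for all m. Let δ₀, δ₁, δ₂ > 0 and κ₀, κ₁, κ₂ ≥ 0, and define the Rician channels h₀ = √(δ₀κ₀/(1+κ₀)) h̄₀ + √(δ₀/(1+κ₀)) h̃₀, H₁ = √(δ₁κ₁/(1+κ₁)) H̄₁ + √(δ₁/(1+κ₁)) H̃₁, h₂ = √(δ₂κ₂/(1+κ₂)) h̄₂ + √(δ₂/(1+κ₂)) h̃₂, and the effective channel h = h₀ + H₁ᵀ Ξ h₂ (so hᵀ = h₀ᵀ + h₂ᵀ Ξ H₁). Then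 the N×N matrix E[h* hᵀ], whose (i,j) entry is E[conj(h_i) h_j], equals (δ₀κ₀/(1+κ₀)) h̄₀* h̄₀ᵀ + (δ₀/(1+κ₀) + M δ₁δ₂/(1+κ₁)) I_N + √(δ₀δ₁δ₂ κ₀κ₁κ₂ / ((1+κ₀)(1+κ₁)(1+κ₂))) ( h̄₀* h̄₂ᵀ Ξ H̄₁ + H̄₁ᴴ Ξ* h̄₂* h̄₀ᵀ ) + (M δ₁δ₂ κ₁ / ((1+κ₁)(1+κ₂))) b bᴴ + (δ₁δ₂ κ₁κ₂ / ((1+κ₁)(1+κ₂))) H̄₁ᴴ Ξ* h̄₂* h̄₂ᵀ Ξ H̄₁. -/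
/-!
Every entry of `h` is a linear combination of the monomials `1`, `x_k` and `H̃₁[m,n] h̃₂[m]` in
the independent standard entries `x_k`. Monomials over distinct sets of independent standard
variables are orthonormal in `L²(μ)`: `E[conj(x_S) x_T]` factors over the coordinates into
`E|x_k|² = 1`, `E[x_k] = 0`, `E[conj x_k] = 0` and `1`. So `E[conj(h_i) h_j]` is the sum of the
products of the coefficients, a finite computation; unit modulus of `ξ`, `‖a‖² = ‖h̄₂‖² = M` and
the Rician weights `(√(δκ/(1+κ)))² + (√(δ/(1+κ)))² = δ` turn it into the stated closed form.
-/

open MeasureTheory ProbabilityTheory Matrix Complex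

noncomputable section

/-- A standard complex random variable: measurable, square-integrable,
mean `0` and second absolute moment `1`. -/
def IsStdComplexRV {Ω : Type*} [MeasurableSpace Ω] (μ : Measure Ω) (x : Ω → ℂ) : Prop :=
  Measurable x ∧ MemLp x 2 μ ∧ (∫ ω, x ω ∂μ) = 0 ∧ (∫ ω, ‖x ω‖ ^ 2 ∂μ) = 1

/-- The combined family of the `N + M + M*N` scalar entries of the NLoS components
`htil0 : Ω → ℂ^N`, `htil2 : Ω → ℂ^M`, `Htil1 : Ω → ℂ^{M×N}`. -/
def rvFamily {Ω : Type*} {N M : ℕ} (htil0 : Ω → Fin N → ℂ) (htil2 : Ω → Fin M → ℂ)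
    (Htil1 : Ω → Matrix (Fin M) (Fin N) ℂ) :
    (Fin N ⊕ (Fin M ⊕ Fin M × Fin N)) → Ω → ℂ
  | .inl n => fun ω => htil0 ω n
  | .inr (.inl m) => fun ω => htil2 ω m
  | .inr (.inr p) => fun ω => Htil1 ω p.1 p.2



open ComplexConjugate Function

namespace IsStdComplexRV

variable {Ω : Type*} [MeasurableSpace Ω] {μ : Measure Ω} {x : Ω → ℂ}

lemma integral_conj_eq_zero (hx : IsStdComplexRV μ x) : ∫ ω, conj (x ω) ∂μ = 0 := by
  rw [integral_conj, hx.2.2.1, map_zero]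

lemma integral_conj_mul_self (hx : IsStdComplexRV μ x) : ∫ ω, conj (x ω) * x ω ∂μ = 1 := by
  simp_rw [conj_mul', ← ofReal_pow]
  rw [integral_complex_ofReal, hx.2.2.2, ofReal_one]

lemma integral_ite_conj_mul_ite [IsProbabilityMeasure μ] (hx : IsStdComplexRV μ x)
    (p q : Prop) [Decidable p] [Decidable q] :
    ∫ ω, (if p then conj (x ω) else 1) * (if q then x ω else 1) ∂μ = if p ↔ q then 1 else 0 := by
  by_cases hp : p <;> by_cases hq : q <;>
    simp [hp, hq, hx.integral_conj_mul_self, hx.integral_conj_eq_zero, hx.2.2.1]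

end IsStdComplexRV

section Monomials

variable {Ω ι : Type*} [MeasurableSpace Ω] {μ : Measure Ω} {x : ι → Ω → ℂ}

def rvMonomial (x : ι → Ω → ℂ) (S : Finset ι) (ω : Ω) : ℂ := ∏ k ∈ S, x k ω

variable [Fintype ι] [DecidableEq ι]

theorem integral_conj_rvMonomial_mul_rvMonomial (hstd : ∀ k, IsStdComplexRV μ (x k))
    (hind : iIndepFun x μ) (S T : Finset ι) :
    ∫ ω, conj (rvMonomial x S ω) * rvMonomial x T ω ∂μ = if S = T then 1 else 0 := by
  have := hind.isProbabilityMeasure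
  have hprod : ∀ ω, conj (rvMonomial x S ω) * rvMonomial x T ω
      = ∏ k, (if k ∈ S then conj (x k ω) else 1) * (if k ∈ T then x k ω else 1) := fun ω => by
    rw [Finset.prod_mul_distrib, Fintype.prod_ite_mem, Fintype.prod_ite_mem, rvMonomial,
      rvMonomial, map_prod]
  simp_rw [hprod]
  rw [hind.integral_fun_prod_comp (f := fun k z => (if k ∈ S then conj z else 1) *
      (if k ∈ T then z else 1)) (fun k => (hstd k).1.aemeasurable)
      (fun k => by split_ifs <;> fun_prop)]
  simp_rw [(hstd _).integral_ite_conj_mul_ite, Fintype.prod_boole, Finset.ext_iff]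

theorem memLp_rvMonomial (hstd : ∀ k, IsStdComplexRV μ (x k)) (hind : iIndepFun x μ)
    (S : Finset ι) : MemLp (rvMonomial x S) 2 μ := by
  have hmeas : Measurable (rvMonomial x S) :=
    Finset.measurable_fun_prod S fun k _ => (hstd k).1
  rw [memLp_two_iff_integrable_sq_norm hmeas.aestronglyMeasurable]
  -- a non-integrable function has integral `0`, whereas `E|x_S|² = 1`
  have hint : Integrable (fun ω => conj (rvMonomial x S ω) * rvMonomial x S ω) μ :=
    .of_integral_ne_zero (by simp [integral_conj_rvMonomial_mul_rvMonomial hstd hind])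
  simpa [conj_mul', ← ofReal_pow] using hint.re

end Monomials

section Orthonormal

variable {Ω τ : Type*} [MeasurableSpace Ω] {μ : Measure Ω} [Fintype τ] [DecidableEq τ]
  {e : τ → Ω → ℂ}

theorem integral_conj_sum_mul_sum_of_orthonormal (he : ∀ t, MemLp (e t) 2 μ)
    (horth : ∀ t s, ∫ ω, conj (e t ω) * e s ω ∂μ = if t = s then 1 else 0) (a b : τ → ℂ) :
    ∫ ω, conj (∑ t, a t * e t ω) * ∑ t, b t * e t ω ∂μ = ∑ t, conj (a t) * b t := by
  have hexpand : ∀ ω, conj (∑ t, a t * e t ω) * ∑ t, b t * e t ω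
      = ∑ t, ∑ s, conj (a t) * b s * (conj (e t ω) * e s ω) := fun ω => by
    simp only [map_sum, map_mul, Finset.sum_mul_sum]
    exact Fintype.sum_congr _ _ fun t => Fintype.sum_congr _ _ fun s => by ring
  have hint : ∀ t s, Integrable (fun ω => conj (e t ω) * e s ω) μ := fun t s =>
    (he t).star.integrable_mul (he s)
  simp_rw [hexpand]
  rw [integral_finsetSum _ fun t _ => integrable_finsetSum _ fun s _ => (hint t s).const_mul _]
  simp_rw [integral_finsetSum _ fun s _ => (hint _ s).const_mul _, integral_const_mul, horth]
  simp

theorem integral_conj_sum_mul_sum_rvMonomial {ι : Type*} [Fintype ι] [DecidableEq ι]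
    {x : ι → Ω → ℂ} (hstd : ∀ k, IsStdComplexRV μ (x k)) (hind : iIndepFun x μ)
    {σ : τ → Finset ι} (hσ : Injective σ) (a b : τ → ℂ) :
    ∫ ω, conj (∑ t, a t * rvMonomial x (σ t) ω) * ∑ t, b t * rvMonomial x (σ t) ω ∂μ
      = ∑ t, conj (a t) * b t :=
  integral_conj_sum_mul_sum_of_orthonormal (fun t => memLp_rvMonomial hstd hind (σ t))
    (fun t s => by simp only [integral_conj_rvMonomial_mul_rvMonomial hstd hind, hσ.eq_iff]) a b

end Orthonormal

namespace Matrix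

variable {m n : Type*}

theorem map_conj_diagonal [DecidableEq m] (ξ : m → ℂ) :
    (diagonal ξ).map conj = (diagonal ξ)ᴴ := by
  rw [diagonal_conjTranspose, diagonal_map (map_zero _)]
  rfl

variable [Fintype m]

theorem conjTranspose_mulVec_conj (A : Matrix m n ℂ) (u : m → ℂ) :
    Aᴴ *ᵥ (fun i => conj (u i)) = fun j => conj ((u ᵥ* A) j) :=
  (star_vecMul A u).symm

theorem conjTranspose_mul_vecMulVec_conj_mul (A : Matrix m n ℂ) (u : m → ℂ) :
    Aᴴ * vecMulVec (fun i => conj (u i)) u * A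
      = vecMulVec (fun j => conj ((u ᵥ* A) j)) (u ᵥ* A) := by
  rw [mul_vecMulVec, vecMulVec_mul, conjTranspose_mulVec_conj]

theorem conjTranspose_vecMulVec_conj_mul_self (a : m → ℂ) (b : n → ℂ) :
    (vecMulVec a fun j => conj (b j))ᴴ * vecMulVec a (fun j => conj (b j))
      = ((∑ i, ‖a i‖ ^ 2 : ℝ) : ℂ) • vecMulVec b fun j => conj (b j) := by
  rw [conjTranspose_vecMulVec, vecMulVec_mul_vecMulVec, vecMulVec_smul]
  congr 2
  · simp [dotProduct, conj_mul']
  · funext j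
    simp

theorem conjTranspose_diagonal_mul_mul_diagonal_mul [DecidableEq m] {ξ : m → ℂ}
    (hξ : ∀ i, ‖ξ i‖ = 1) (A : Matrix m n ℂ) :
    (diagonal ξ * A)ᴴ * (diagonal ξ * A) = Aᴴ * A := by
  have hunitary : (diagonal ξ)ᴴ * diagonal ξ = 1 := by
    rw [diagonal_conjTranspose, diagonal_mul_diagonal, ← diagonal_one]
    congr 1
    funext i
    simp [conj_mul', hξ]
  rw [conjTranspose_mul, Matrix.mul_assoc, ← Matrix.mul_assoc _ (diagonal ξ), hunitary,
    Matrix.one_mul]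

end Matrix

section CascadedChannel

variable {N M : ℕ}

abbrev CascadeEntry (N M : ℕ) := Fin N ⊕ (Fin M ⊕ Fin M × Fin N)

abbrev CascadeTerm (N M : ℕ) := Option (CascadeEntry N M ⊕ Fin M × Fin N)

def cascadeMonomial : CascadeTerm N M → Finset (CascadeEntry N M)
  | none => ∅
  | some (.inl k) => {k}
  | some (.inr (m, n)) => {.inr (.inr (m, n)), .inr (.inl m)}

theorem cascadeMonomial_injective : Injective (cascadeMonomial (N := N) (M := M)) := by
  rintro (_ | k | ⟨m, n⟩) (_ | k' | ⟨m', n'⟩) h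
  all_goals first
    | rfl
    | exact congrArg (some ∘ Sum.inl) (Finset.singleton_injective h)
    | simpa [cascadeMonomial] using congrArg Finset.card h
    | simpa [cascadeMonomial] using congrArg (Sum.inr (Sum.inr (m, n)) ∈ ·) h

variable (hbar0 : Fin N → ℂ) (hbar2 : Fin M → ℂ) (Hbar1 : Matrix (Fin M) (Fin N) ℂ)
  (ξ : Fin M → ℂ) (c0 s0 c1 s1 c2 s2 : ℝ)

def cascadeCoeff (j : Fin N) : CascadeTerm N M → ℂ
  | none => c0 * hbar0 j + c1 * c2 * (hbar2 ᵥ* (diagonal ξ * Hbar1)) j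
  | some (.inl (.inl n)) => if n = j then s0 else 0
  | some (.inl (.inr (.inl m))) => c1 * s2 * (diagonal ξ * Hbar1) m j
  | some (.inl (.inr (.inr (m, n)))) => if n = j then s1 * c2 * ξ m * hbar2 m else 0
  | some (.inr (m, n)) => if n = j then s1 * s2 * ξ m else 0

theorem cascadedChannel_apply_eq_sum {Ω : Type*} (htil0 : Ω → Fin N → ℂ)
    (htil2 : Ω → Fin M → ℂ) (Htil1 : Ω → Matrix (Fin M) (Fin N) ℂ) (ω : Ω) (j : Fin N) :
    ((c0 : ℂ) • hbar0 + (s0 : ℂ) • htil0 ω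
        + ((c1 : ℂ) • Hbar1 + (s1 : ℂ) • Htil1 ω)ᵀ *ᵥ
          (diagonal ξ *ᵥ ((c2 : ℂ) • hbar2 + (s2 : ℂ) • htil2 ω))) j
      = ∑ t, cascadeCoeff hbar0 hbar2 Hbar1 ξ c0 s0 c1 s1 c2 s2 j t
          * rvMonomial (rvFamily htil0 htil2 Htil1) (cascadeMonomial t) ω := by
  have hsum : ∑ m, ((c1 : ℂ) * Hbar1 m j + s1 * Htil1 ω m j) * ξ m
        * (c2 * hbar2 m + s2 * htil2 ω m)
      = c1 * c2 * ∑ m, hbar2 m * (ξ m * Hbar1 m j)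
        + ∑ m, c1 * s2 * (ξ m * Hbar1 m j) * htil2 ω m
        + ∑ m, s1 * c2 * ξ m * hbar2 m * Htil1 ω m j
        + ∑ m, s1 * s2 * ξ m * (Htil1 ω m j * htil2 ω m) := by
    simp only [Finset.mul_sum, ← Finset.sum_add_distrib]
    exact Finset.sum_congr rfl fun m _ => by ring
  simp only [coe_smul, transpose_add, transpose_smul, mulVec_mulVec, Pi.add_apply,
    Pi.smul_apply, real_smul, mulVec, dotProduct, mul_diagonal, Matrix.add_apply,
    Matrix.smul_apply, transpose_apply, cascadeCoeff, vecMul, diagonal_mul, rvMonomial,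
    cascadeMonomial, rvFamily, Fintype.sum_option, Finset.prod_empty, mul_one,
    Fintype.sum_sum_type, Finset.prod_singleton, ite_mul, zero_mul, Finset.sum_ite_eq',
    Finset.mem_univ, ↓reduceIte, Fintype.sum_prod_type, Finset.mem_singleton, Sum.inr.injEq,
    reduceCtorEq, not_false_eq_true, Finset.prod_insert]
  linear_combination hsum

theorem sum_conj_cascadeCoeff_mul_cascadeCoeff (i j : Fin N) :
    ∑ t, conj (cascadeCoeff hbar0 hbar2 Hbar1 ξ c0 s0 c1 s1 c2 s2 i t)
        * cascadeCoeff hbar0 hbar2 Hbar1 ξ c0 s0 c1 s1 c2 s2 j t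
      = conj (cascadeCoeff hbar0 hbar2 Hbar1 ξ c0 s0 c1 s1 c2 s2 i none)
          * cascadeCoeff hbar0 hbar2 Hbar1 ξ c0 s0 c1 s1 c2 s2 j none
        + (if i = j then
            ((s0 ^ 2 + s1 ^ 2 * ∑ m, ‖ξ m‖ ^ 2 * (c2 ^ 2 * ‖hbar2 m‖ ^ 2 + s2 ^ 2) : ℝ) : ℂ)
            else 0)
        + ((c1 ^ 2 * s2 ^ 2 : ℝ) : ℂ) * ((diagonal ξ * Hbar1)ᴴ * (diagonal ξ * Hbar1)) i j := by
  have hG : ∑ m, c1 * s2 * (conj (ξ m) * conj (Hbar1 m i)) * (c1 * s2 * (ξ m * Hbar1 m j))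
      = c1 ^ 2 * s2 ^ 2 * ∑ m, conj (ξ m) * conj (Hbar1 m i) * (ξ m * Hbar1 m j) := by
    rw [Finset.mul_sum]
    exact Finset.sum_congr rfl fun m _ => by ring
  rw [mul_apply]
  rcases eq_or_ne i j with rfl | hij
  · simp only [cascadeCoeff, diagonal_mul, Fintype.sum_option, map_add, map_mul, conj_ofReal,
      Fintype.sum_sum_type, mul_ite, mul_zero, Finset.sum_ite_eq', Finset.mem_univ, ↓reduceIte,
      Fintype.sum_prod_type, ofReal_add, ofReal_pow, ofReal_mul, ofReal_sum, conjTranspose_apply,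
      star_mul', RCLike.star_def]
    have hI : ∑ m, s1 * c2 * conj (ξ m) * conj (hbar2 m) * (s1 * c2 * ξ m * hbar2 m)
          + ∑ m, s1 * s2 * conj (ξ m) * (s1 * s2 * ξ m)
        = s1 ^ 2 * ∑ m, (‖ξ m‖ : ℂ) ^ 2 * (c2 ^ 2 * (‖hbar2 m‖ : ℂ) ^ 2 + s2 ^ 2) := by
      rw [Finset.mul_sum, ← Finset.sum_add_distrib]
      exact Finset.sum_congr rfl fun m _ => by simp only [← conj_mul']; ring
    linear_combination hG + hI
  · simp only [cascadeCoeff, diagonal_mul, Fintype.sum_option, map_add, map_mul, conj_ofReal,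
      Fintype.sum_sum_type, mul_ite, mul_zero, Finset.sum_ite_eq', Finset.mem_univ, ↓reduceIte,
      Fintype.sum_prod_type, hij, hij.symm, add_zero, ofReal_mul, ofReal_pow, conjTranspose_apply,
      star_mul', RCLike.star_def, add_right_inj, map_zero, zero_mul, Finset.sum_const_zero,
      zero_add]
    exact hG

variable {hbar0 hbar2 Hbar1 ξ c0 s0 c1 s1 c2 s2}

theorem cascadedChannel_correlation {Ω : Type*} [MeasurableSpace Ω] {μ : Measure Ω}
    {htil0 : Ω → Fin N → ℂ} {htil2 : Ω → Fin M → ℂ} {Htil1 : Ω → Matrix (Fin M) (Fin N) ℂ}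
    (hstd : ∀ k, IsStdComplexRV μ (rvFamily htil0 htil2 Htil1 k))
    (hind : iIndepFun (rvFamily htil0 htil2 Htil1) μ) (h : Ω → Fin N → ℂ)
    (hh : ∀ ω, h ω = (c0 : ℂ) • hbar0 + (s0 : ℂ) • htil0 ω
        + ((c1 : ℂ) • Hbar1 + (s1 : ℂ) • Htil1 ω)ᵀ *ᵥ
          (diagonal ξ *ᵥ ((c2 : ℂ) • hbar2 + (s2 : ℂ) • htil2 ω))) :
    (Matrix.of fun i j : Fin N => ∫ ω, conj (h ω i) * h ω j ∂μ) =
      ((c0 ^ 2 : ℝ) : ℂ) • vecMulVec (fun i => conj (hbar0 i)) hbar0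
        + ((s0 ^ 2 + s1 ^ 2 * ∑ m, ‖ξ m‖ ^ 2 * (c2 ^ 2 * ‖hbar2 m‖ ^ 2 + s2 ^ 2) : ℝ) : ℂ) •
            (1 : Matrix (Fin N) (Fin N) ℂ)
        + ((c0 * c1 * c2 : ℝ) : ℂ) •
            (vecMulVec (fun i => conj (hbar0 i)) (hbar2 ᵥ* (diagonal ξ * Hbar1))
              + vecMulVec ((Hbar1ᴴ * (diagonal ξ).map conj) *ᵥ fun m => conj (hbar2 m)) hbar0)
        + ((c1 ^ 2 * s2 ^ 2 : ℝ) : ℂ) • ((diagonal ξ * Hbar1)ᴴ * (diagonal ξ * Hbar1))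
        + ((c1 ^ 2 * c2 ^ 2 : ℝ) : ℂ) •
            (Hbar1ᴴ * (diagonal ξ).map conj * vecMulVec (fun m => conj (hbar2 m)) hbar2
              * diagonal ξ * Hbar1) := by
  have hHξ : Hbar1ᴴ * (diagonal ξ).map conj = (diagonal ξ * Hbar1)ᴴ := by
    rw [map_conj_diagonal, conjTranspose_mul]
  rw [hHξ, Matrix.mul_assoc _ (diagonal ξ), conjTranspose_mul_vecMulVec_conj_mul,
    conjTranspose_mulVec_conj]
  ext i j
  simp only [of_apply, hh, cascadedChannel_apply_eq_sum]
  rw [integral_conj_sum_mul_sum_rvMonomial hstd hind cascadeMonomial_injective,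
    sum_conj_cascadeCoeff_mul_cascadeCoeff]
  simp only [cascadeCoeff, map_add, map_mul, conj_ofReal, ofReal_add, ofReal_pow, ofReal_mul,
    ofReal_sum, Matrix.add_apply, Matrix.smul_apply, vecMulVec_apply, smul_eq_mul, one_apply,
    mul_ite, mul_one, mul_zero]
  ring

end CascadedChannel

theorem statistical_CSI_effective_channel_correlation_general
    {Ω : Type*} [MeasurableSpace Ω] (μ : Measure Ω)
    (N M : ℕ)
    (htil0 : Ω → Fin N → ℂ) (htil2 : Ω → Fin M → ℂ) (Htil1 : Ω → Matrix (Fin M) (Fin N) ℂ)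
    (hstd : ∀ k, IsStdComplexRV μ (rvFamily htil0 htil2 Htil1 k))
    (hindep : iIndepFun (rvFamily htil0 htil2 Htil1) μ)
    (hbar0 : Fin N → ℂ)
    (hbar2 : Fin M → ℂ) (hhbar2 : ∑ m, ‖hbar2 m‖ ^ 2 = (M : ℝ))
    (a : Fin M → ℂ) (b : Fin N → ℂ) (ha : ∑ m, ‖a m‖ ^ 2 = (M : ℝ))
    (Hbar1 : Matrix (Fin M) (Fin N) ℂ)
    (hHbar1 : Hbar1 = Matrix.vecMulVec a (fun j => (starRingEnd ℂ) (b j)))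
    (ξ : Fin M → ℂ) (hξ : ∀ m, ‖ξ m‖ = 1)
    (Ξ : Matrix (Fin M) (Fin M) ℂ) (hΞ : Ξ = Matrix.diagonal ξ)
    (δ0 δ1 δ2 : ℝ) (hδ0 : 0 < δ0) (hδ1 : 0 < δ1) (hδ2 : 0 < δ2)
    (κ0 κ1 κ2 : ℝ) (hκ0 : 0 ≤ κ0) (hκ1 : 0 ≤ κ1) (hκ2 : 0 ≤ κ2)
    (h0 : Ω → Fin N → ℂ)
    (hh0 : ∀ ω n, h0 ω n =
      (Real.sqrt (δ0 * κ0 / (1 + κ0)) : ℂ) * hbar0 n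
        + (Real.sqrt (δ0 / (1 + κ0)) : ℂ) * htil0 ω n)
    (H1 : Ω → Matrix (Fin M) (Fin N) ℂ)
    (hH1 : ∀ ω, H1 ω =
      (Real.sqrt (δ1 * κ1 / (1 + κ1)) : ℂ) • Hbar1
        + (Real.sqrt (δ1 / (1 + κ1)) : ℂ) • Htil1 ω)
    (h2 : Ω → Fin M → ℂ)
    (hh2 : ∀ ω m, h2 ω m =
      (Real.sqrt (δ2 * κ2 / (1 + κ2)) : ℂ) * hbar2 m
        + (Real.sqrt (δ2 / (1 + κ2)) : ℂ) * htil2 ω m)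
    (h : Ω → Fin N → ℂ)
    (hh : ∀ ω, h ω = h0 ω + (H1 ω)ᵀ.mulVec (Ξ.mulVec (h2 ω))) :
    (Matrix.of fun i j : Fin N => ∫ ω, (starRingEnd ℂ) (h ω i) * h ω j ∂μ) =
      ((δ0 * κ0 / (1 + κ0) : ℝ) : ℂ) •
          Matrix.vecMulVec (fun i => (starRingEnd ℂ) (hbar0 i)) hbar0
        + ((δ0 / (1 + κ0) + M * δ1 * δ2 / (1 + κ1) : ℝ) : ℂ) •
            (1 : Matrix (Fin N) (Fin N) ℂ)
        + (Real.sqrt (δ0 * δ1 * δ2 * κ0 * κ1 * κ2 /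
              ((1 + κ0) * (1 + κ1) * (1 + κ2))) : ℂ) •
            (Matrix.vecMulVec (fun i => (starRingEnd ℂ) (hbar0 i))
                (Matrix.vecMul hbar2 (Ξ * Hbar1))
              + Matrix.vecMulVec
                  ((Hbar1ᴴ * Ξ.map (starRingEnd ℂ)).mulVec
                    (fun m => (starRingEnd ℂ) (hbar2 m))) hbar0)
        + ((M * δ1 * δ2 * κ1 / ((1 + κ1) * (1 + κ2)) : ℝ) : ℂ) •
            Matrix.vecMulVec b (fun j => (starRingEnd ℂ) (b j))
        + ((δ1 * δ2 * κ1 * κ2 / ((1 + κ1) * (1 + κ2)) : ℝ) : ℂ) •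
            (Hbar1ᴴ * Ξ.map (starRingEnd ℂ)
              * Matrix.vecMulVec (fun m => (starRingEnd ℂ) (hbar2 m)) hbar2
              * Ξ * Hbar1) := by
  subst hHbar1 hΞ
  have hchannel : ∀ ω, h ω
      = (√(δ0 * κ0 / (1 + κ0)) : ℂ) • hbar0 + (√(δ0 / (1 + κ0)) : ℂ) • htil0 ω
        + ((√(δ1 * κ1 / (1 + κ1)) : ℂ) • vecMulVec a (fun j => conj (b j))
            + (√(δ1 / (1 + κ1)) : ℂ) • Htil1 ω)ᵀ *ᵥ
          (diagonal ξ *ᵥ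
            ((√(δ2 * κ2 / (1 + κ2)) : ℂ) • hbar2 + (√(δ2 / (1 + κ2)) : ℂ) • htil2 ω)) :=
    fun ω => by
      rw [hh, hH1, show h0 ω = _ from funext (hh0 ω), show h2 ω = _ from funext (hh2 ω)]
      rfl
  rw [cascadedChannel_correlation hstd hindep h hchannel,
    conjTranspose_diagonal_mul_mul_diagonal_mul hξ, conjTranspose_vecMulVec_conj_mul_self, ha,
    smul_smul, ← ofReal_mul]
  simp (disch := positivity) only [Real.sq_sqrt]
  have hcross : √(δ0 * κ0 / (1 + κ0)) * √(δ1 * κ1 / (1 + κ1)) * √(δ2 * κ2 / (1 + κ2))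
      = √(δ0 * δ1 * δ2 * κ0 * κ1 * κ2 / ((1 + κ0) * (1 + κ1) * (1 + κ2))) := by
    rw [← Real.sqrt_mul (by positivity), ← Real.sqrt_mul (by positivity)]
    congr 1
    field_simp
  simp only [hξ, one_pow, one_mul, Finset.sum_add_distrib, ← Finset.mul_sum, hhbar2,
    Finset.sum_const, Finset.card_univ, Fintype.card_fin, nsmul_eq_mul, hcross]
  -- the five summands now differ at most in their real coefficients
  refine congrArg₂ (· + ·) (congrArg₂ (· + ·) (congrArg₂ (· + ·)
    (congrArg₂ (· + ·) rfl ?_) rfl) ?_) ?_ <;> congr 2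
  · field_simp
    ring
  · field_simp
  · field_simp

/-- Theorem 1 of the paper: the second-order statistics of the effective
RIS-aided channel `h = h₀ + H₁ᵀ Ξ h₂` with mutually independent Rician channels
`h₀ = √(δ₀κ₀/(1+κ₀)) h̄₀ + √(δ₀/(1+κ₀)) h̃₀`, `H₁ = √(δ₁κ₁/(1+κ₁)) H̄₁ + √(δ₁/(1+κ₁)) H̃₁`,
`h₂ = √(δ₂κ₂/(1+κ₂)) h̄₂ + √(δ₂/(1+κ₂)) h̃₂`, where `H̄₁ = a bᴴ`, `‖a‖² = ‖h̄₂‖² = M`, and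
`Ξ = diag(ξ)` with unit-modulus entries:
`E[h* hᵀ] = (δ₀κ₀/(1+κ₀)) h̄₀* h̄₀ᵀ + (δ₀/(1+κ₀) + Mδ₁δ₂/(1+κ₁)) I_N
  + √(δ₀δ₁δ₂κ₀κ₁κ₂/((1+κ₀)(1+κ₁)(1+κ₂))) (h̄₀* h̄₂ᵀ Ξ H̄₁ + H̄₁ᴴ Ξ* h̄₂* h̄₀ᵀ)
  + (Mδ₁δ₂κ₁/((1+κ₁)(1+κ₂))) b bᴴ
  + (δ₁δ₂κ₁κ₂/((1+κ₁)(1+κ₂))) H̄₁ᴴ Ξ* h̄₂* h̄₂ᵀ Ξ H̄₁`. -/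
theorem statistical_CSI_effective_channel_correlation
    {Ω : Type*} [MeasurableSpace Ω] (μ : Measure Ω) [IsProbabilityMeasure μ]
    (N M : ℕ) (hN : 1 ≤ N) (hM : 1 ≤ M)
    (htil0 : Ω → Fin N → ℂ) (htil2 : Ω → Fin M → ℂ) (Htil1 : Ω → Matrix (Fin M) (Fin N) ℂ)
    (hstd : ∀ k, IsStdComplexRV μ (rvFamily htil0 htil2 Htil1 k))
    (hindep : iIndepFun (rvFamily htil0 htil2 Htil1) μ)
    (hbar0 : Fin N → ℂ)
    (hbar2 : Fin M → ℂ) (hhbar2 : ∑ m, ‖hbar2 m‖ ^ 2 = (M : ℝ))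
    (a : Fin M → ℂ) (b : Fin N → ℂ) (ha : ∑ m, ‖a m‖ ^ 2 = (M : ℝ))
    (Hbar1 : Matrix (Fin M) (Fin N) ℂ)
    (hHbar1 : Hbar1 = Matrix.vecMulVec a (fun j => (starRingEnd ℂ) (b j)))
    (ξ : Fin M → ℂ) (hξ : ∀ m, ‖ξ m‖ = 1)
    (Ξ : Matrix (Fin M) (Fin M) ℂ) (hΞ : Ξ = Matrix.diagonal ξ)
    (δ0 δ1 δ2 : ℝ) (hδ0 : 0 < δ0) (hδ1 : 0 < δ1) (hδ2 : 0 < δ2)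
    (κ0 κ1 κ2 : ℝ) (hκ0 : 0 ≤ κ0) (hκ1 : 0 ≤ κ1) (hκ2 : 0 ≤ κ2)
    (h0 : Ω → Fin N → ℂ)
    (hh0 : ∀ ω n, h0 ω n =
      (Real.sqrt (δ0 * κ0 / (1 + κ0)) : ℂ) * hbar0 n
        + (Real.sqrt (δ0 / (1 + κ0)) : ℂ) * htil0 ω n)
    (H1 : Ω → Matrix (Fin M) (Fin N) ℂ)
    (hH1 : ∀ ω, H1 ω =
      (Real.sqrt (δ1 * κ1 / (1 + κ1)) : ℂ) • Hbar1
        + (Real.sqrt (δ1 / (1 + κ1)) : ℂ) • Htil1 ω)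
    (h2 : Ω → Fin M → ℂ)
    (hh2 : ∀ ω m, h2 ω m =
      (Real.sqrt (δ2 * κ2 / (1 + κ2)) : ℂ) * hbar2 m
        + (Real.sqrt (δ2 / (1 + κ2)) : ℂ) * htil2 ω m)
    (h : Ω → Fin N → ℂ)
    (hh : ∀ ω, h ω = h0 ω + (H1 ω)ᵀ.mulVec (Ξ.mulVec (h2 ω))) :
    (Matrix.of fun i j : Fin N => ∫ ω, (starRingEnd ℂ) (h ω i) * h ω j ∂μ) =
      ((δ0 * κ0 / (1 + κ0) : ℝ) : ℂ) •
          Matrix.vecMulVec (fun i => (starRingEnd ℂ) (hbar0 i)) hbar0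
        + ((δ0 / (1 + κ0) + M * δ1 * δ2 / (1 + κ1) : ℝ) : ℂ) •
            (1 : Matrix (Fin N) (Fin N) ℂ)
        + (Real.sqrt (δ0 * δ1 * δ2 * κ0 * κ1 * κ2 /
              ((1 + κ0) * (1 + κ1) * (1 + κ2))) : ℂ) •
            (Matrix.vecMulVec (fun i => (starRingEnd ℂ) (hbar0 i))
                (Matrix.vecMul hbar2 (Ξ * Hbar1))
              + Matrix.vecMulVec
                  ((Hbar1ᴴ * Ξ.map (starRingEnd ℂ)).mulVec
                    (fun m => (starRingEnd ℂ) (hbar2 m))) hbar0)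
        + ((M * δ1 * δ2 * κ1 / ((1 + κ1) * (1 + κ2)) : ℝ) : ℂ) •
            Matrix.vecMulVec b (fun j => (starRingEnd ℂ) (b j))
        + ((δ1 * δ2 * κ1 * κ2 / ((1 + κ1) * (1 + κ2)) : ℝ) : ℂ) •
            (Hbar1ᴴ * Ξ.map (starRingEnd ℂ)
              * Matrix.vecMulVec (fun m => (starRingEnd ℂ) (hbar2 m)) hbar2
              * Ξ * Hbar1) :=
  statistical_CSI_effective_channel_correlation_general μ N M htil0 htil2 Htil1 hstd hindep hbar0
    hbar2 hhbar2 a b ha Hbar1 hHbar1 ξ hξ Ξ hΞ δ0 δ1 δ2 hδ0 hδ1 hδ2 κ0 κ1 κ2 hκ0 hκ1 hκ2 h0 hh0 H1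
    hH1 h2 hh2 h hh
end
end

section
/- Let Ω be a probability space and N, M ≥ 1. Let h̃₂ : Ω → ℂ^M and H̃₁ : Ω → ℂ^{M×N} be random arrays whose M + MN scalar entries form a mutually independent family of standard complex random variables. Let h̄₂ ∈ ℂ^M with ‖h̄₂‖² = M, let H̄₁ = a bᴴ with a ∈ ℂ^M, b ∈ ℂ^N and ‖a‖² = M, and let Ξ = diag(ξ₁,…,ξ_M) with |ξ_m| = 1 for all m. Let δ₁, δ₂ > 0 and κ₁, κ₂ ≥ 0, and define H₁ = √(δ₁κ₁/(1+κ₁)) H̄₁ + √(δ₁/(1+κ₁)) H̃₁ and h₂ = √(δ₂κ₂/(1+κ₂)) h̄₂ + √(δ₂/(1+κ₂)) h̃₂. Then the N×N matrix E[H₁ᴴ Ξ* h₂* h₂ᵀ Ξ H₁] (expectation entrywise) equals (M δ₁δ₂/(1+κ₁)) I_N + (M δ₁δ₂ κ₁ / ((1+κ₁)(1+κ₂))) b bᴴ + (δ₁δ₂ κ₁κ₂ / ((1+κ₁)(1+κ₂))) H̄₁ᴴ Ξ* h̄₂* h̄₂ᵀ Ξ H̄₁. -/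
open MeasureTheory ProbabilityTheory Matrix Complex

noncomputable section

/-- The combined family of the `M + M*N` scalar entries of the NLoS components
`htil2 : Ω → ℂ^M` and `Htil1 : Ω → ℂ^{M×N}`. -/
def rvFamily2 {Ω : Type*} {N M : ℕ} (htil2 : Ω → Fin M → ℂ)
    (Htil1 : Ω → Matrix (Fin M) (Fin N) ℂ) :
    (Fin M ⊕ Fin M × Fin N) → Ω → ℂ
  | .inl m => fun ω => htil2 ω m
  | .inr p => fun ω => Htil1 ω p.1 p.2

/-! Write `u = Ξ h₂`, so that the integrand is `H₁ᴴ u* uᵀ H₁`. Since `u` is an affine function of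
`h̃₂` and `H₁` one of `H̃₁`, they are independent, and the expectation factors entrywise through
`R = E[u* uᵀ] = E[u]* E[u]ᵀ + (δ₂/(1+κ₂)) I`. The entries of `H̃₁` being independent and standard,
`E[H₁ᴴ R H₁] = E[H₁]ᴴ R E[H₁] + (δ₁/(1+κ₁)) tr(R) I`. Finally `|ξ_m| = 1` and `‖h̄₂‖² = M` give
`tr R = M δ₂`, and `‖a‖² = M` gives `H̄₁ᴴ H̄₁ = M b bᴴ`. -/

section StdFamily

variable {Ω : Type*} [MeasurableSpace Ω] {μ : Measure Ω}

lemma IsStdComplexRV.integral_conj_mul_self_s5 {x : Ω → ℂ} (hx : IsStdComplexRV μ x) :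
    ∫ ω, starRingEnd ℂ (x ω) * x ω ∂μ = 1 := by
  have hnorm : ∀ ω, starRingEnd ℂ (x ω) * x ω = ((‖x ω‖ ^ 2 : ℝ) : ℂ) := fun ω => by
    push_cast; exact Complex.conj_mul' _
  simp_rw [hnorm, integral_complex_ofReal, hx.2.2.2, ofReal_one]

lemma IsStdComplexRV.memLp_two_of_eq_affine [IsFiniteMeasure μ] {x y : Ω → ℂ}
    (hx : IsStdComplexRV μ x) {c s : ℂ} (hy : ∀ ω, y ω = c + s * x ω) : MemLp y 2 μ := by
  rw [funext hy]
  exact (memLp_const c).add (hx.2.1.const_mul s)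

variable {ι : Type*} [DecidableEq ι] {X : ι → Ω → ℂ}

lemma integral_conj_mul_of_iIndepFun (hX : ∀ k, IsStdComplexRV μ (X k)) (hind : iIndepFun X μ)
    (k l : ι) : ∫ ω, starRingEnd ℂ (X k ω) * X l ω ∂μ = if k = l then 1 else 0 := by
  split_ifs with hkl
  · subst hkl
    exact (hX k).integral_conj_mul_self_s5
  · have hconj : IndepFun (fun ω => starRingEnd ℂ (X k ω)) (X l) μ :=
      (hind.indepFun hkl).comp Complex.continuous_conj.measurable measurable_id
    rw [hconj.integral_fun_mul_eq_mul_integral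
      ((hX k).1.aestronglyMeasurable.star) (hX l).1.aestronglyMeasurable, integral_conj,
      (hX k).2.2.1, map_zero, zero_mul]

lemma integral_conj_mul_of_eq_affine [IsProbabilityMeasure μ] (hX : ∀ k, IsStdComplexRV μ (X k))
    (hind : iIndepFun X μ) {Y : ι → Ω → ℂ} {c s : ι → ℂ}
    (hY : ∀ k ω, Y k ω = c k + s k * X k ω) (k l : ι) :
    ∫ ω, starRingEnd ℂ (Y k ω) * Y l ω ∂μ =
      starRingEnd ℂ (c k) * c l + if k = l then (‖s k‖ : ℂ) ^ 2 else 0 := by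
  simp_rw [hY]
  have hXint : ∀ k, Integrable (X k) μ := fun k => (hX k).2.1.integrable one_le_two
  have hconj : Integrable (fun ω => starRingEnd ℂ (X k ω)) μ :=
    (hX k).2.1.star.integrable one_le_two
  have hprod : Integrable (fun ω => starRingEnd ℂ (X k ω) * X l ω) μ :=
    (hX k).2.1.star.integrable_mul (hX l).2.1
  calc ∫ ω, starRingEnd ℂ (c k + s k * X k ω) * (c l + s l * X l ω) ∂μ
      = ∫ ω, (starRingEnd ℂ (c k) * c l + starRingEnd ℂ (c k) * s l * X l ω
          + starRingEnd ℂ (s k) * c l * starRingEnd ℂ (X k ω)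
          + starRingEnd ℂ (s k) * s l * (starRingEnd ℂ (X k ω) * X l ω)) ∂μ := by
        congr 1; ext ω; simp only [map_add, map_mul]; ring
    _ = starRingEnd ℂ (c k) * c l + if k = l then (‖s k‖ : ℂ) ^ 2 else 0 := by
        rw [integral_add (((integrable_const _).fun_add ((hXint l).const_mul _)).fun_add
            (hconj.const_mul _)) (hprod.const_mul _),
          integral_add ((integrable_const _).fun_add ((hXint l).const_mul _)) (hconj.const_mul _),
          integral_add (integrable_const _) ((hXint l).const_mul _),
          integral_const]
        simp only [integral_const_mul]
        rw [integral_conj, (hX k).2.2.1, (hX l).2.2.1, integral_conj_mul_of_iIndepFun hX hind]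
        split_ifs with hkl
        · subst hkl; simp [conj_mul']
        · simp

end StdFamily

lemma ProbabilityTheory.iIndepFun.indepFun_inl_inr {Ω α β 𝓧 : Type*} [MeasurableSpace Ω]
    {μ : Measure Ω} [Fintype α] [Fintype β] [MeasurableSpace 𝓧] {f : α ⊕ β → Ω → 𝓧}
    (hf : iIndepFun f μ) (hm : ∀ i, Measurable (f i)) :
    IndepFun (fun ω a => f (.inl a) ω) (fun ω b => f (.inr b) ω) μ := by
  classical
  have h := hf.indepFun_finset (Finset.univ.map .inl) (Finset.univ.map .inr)
    (by simp [Finset.disjoint_left]) hm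
  exact h.comp (φ := fun g a => g ⟨.inl a, by simp⟩) (ψ := fun g b => g ⟨.inr b, by simp⟩)
    (measurable_pi_lambda _ fun a => measurable_pi_apply _)
    (measurable_pi_lambda _ fun b => measurable_pi_apply _)

lemma conjTranspose_mul_vecMulVec_mul_apply {ι κ : Type*} [Fintype ι] (A : Matrix ι κ ℂ)
    (u : ι → ℂ) (i j : κ) :
    (Aᴴ * vecMulVec (fun m => starRingEnd ℂ (u m)) u * A) i j =
      ∑ m, ∑ n, starRingEnd ℂ (A m i) * A n j * (starRingEnd ℂ (u m) * u n) := by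
  simp only [mul_apply, conjTranspose_apply, vecMulVec_apply, Finset.sum_mul, RCLike.star_def]
  rw [Finset.sum_comm]
  exact Finset.sum_congr rfl fun m _ => Finset.sum_congr rfl fun n _ => by ring

lemma sum_sum_conj_mul_add_ite_mul {ι κ : Type*} [Fintype ι] [DecidableEq ι] [DecidableEq κ]
    (A : Matrix ι κ ℂ) (R : Matrix ι ι ℂ) (τ : ℂ) (i j : κ) :
    ∑ m, ∑ n, (starRingEnd ℂ (A m i) * A n j + if (m, i) = (n, j) then τ else 0) * R m n =
      (Aᴴ * R * A) i j + if i = j then τ * trace R else 0 := by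
  simp only [add_mul, Finset.sum_add_distrib, mul_apply, conjTranspose_apply, RCLike.star_def,
    Finset.sum_mul, Prod.mk.injEq, ite_and, ite_mul, zero_mul, Finset.sum_ite_eq, Finset.mem_univ,
    if_true, trace, diag_apply]
  congr 1
  · rw [Finset.sum_comm]
    exact Finset.sum_congr rfl fun n _ => Finset.sum_congr rfl fun m _ => by ring
  · split_ifs <;> simp [Finset.mul_sum]

lemma diagonal_map_conj_mul_vecMulVec_mul_diagonal {ι : Type*} [Fintype ι] [DecidableEq ι]
    (ξ w : ι → ℂ) :
    (diagonal ξ).map (starRingEnd ℂ) * vecMulVec (fun m => starRingEnd ℂ (w m)) w * diagonal ξ =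
      vecMulVec (fun m => starRingEnd ℂ (ξ m * w m)) fun m => ξ m * w m := by
  ext m n
  simp [diagonal_map, mul_apply, vecMulVec_apply, diagonal_apply]
  ring

lemma conjTranspose_mul_diagonal_map_conj_mul_vecMulVec_mul_diagonal_mul {ι κ : Type*}
    [Fintype ι] [DecidableEq ι] (A : Matrix ι κ ℂ) (ξ w : ι → ℂ) :
    Aᴴ * (diagonal ξ).map (starRingEnd ℂ) * vecMulVec (fun m => starRingEnd ℂ (w m)) w *
        diagonal ξ * A =
      Aᴴ * vecMulVec (fun m => starRingEnd ℂ (ξ m * w m)) (fun m => ξ m * w m) * A := by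
  rw [Matrix.mul_assoc (Aᴴ * _), Matrix.mul_assoc Aᴴ, Matrix.mul_assoc Aᴴ,
    ← Matrix.mul_assoc _ _ (diagonal ξ), diagonal_map_conj_mul_vecMulVec_mul_diagonal,
    Matrix.mul_assoc]

lemma conjTranspose_vecMulVec_mul_vecMulVec {ι κ : Type*} [Fintype ι] (a : ι → ℂ) (b : κ → ℂ) :
    (vecMulVec a fun j => starRingEnd ℂ (b j))ᴴ * vecMulVec a (fun j => starRingEnd ℂ (b j)) =
      ((∑ m, ‖a m‖ ^ 2 : ℝ) : ℂ) • vecMulVec b fun j => starRingEnd ℂ (b j) := by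
  ext i j
  simp only [mul_apply, conjTranspose_apply, vecMulVec_apply, RCLike.star_def, Matrix.smul_apply,
    smul_eq_mul, ofReal_sum, ofReal_pow, Finset.sum_mul, ← Complex.conj_mul']
  refine Finset.sum_congr rfl fun m _ => ?_
  simp only [map_mul, conj_conj]
  ring

lemma conjTranspose_smul_mul_mul_smul_add_trace {ι κ : Type*} [Fintype ι] [DecidableEq ι]
    [DecidableEq κ] (H : Matrix ι κ ℂ) {ξ : ι → ℂ} (hξ : ∀ m, ‖ξ m‖ = 1)
    (w : ι → ℂ) (c1 c2 d1 d2 : ℂ) :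
    let R := vecMulVec (fun m => starRingEnd ℂ (ξ m * (d1 * w m))) (fun m => ξ m * (d1 * w m)) +
      diagonal fun m => (‖ξ m * d2‖ : ℂ) ^ 2
    (c1 • H)ᴴ * R * (c1 • H) + ((‖c2‖ : ℂ) ^ 2 * trace R) • 1 =
      ((‖c2‖ : ℂ) ^ 2 * (‖d1‖ ^ 2 * (∑ m, ‖w m‖ ^ 2 : ℝ) + ‖d2‖ ^ 2 * Fintype.card ι)) • 1 +
        ((‖c1‖ : ℂ) ^ 2 * ‖d2‖ ^ 2) • (Hᴴ * H) +
        ((‖c1‖ : ℂ) ^ 2 * ‖d1‖ ^ 2) •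
          (Hᴴ * vecMulVec (fun m => starRingEnd ℂ (ξ m * w m)) (fun m => ξ m * w m) * H) := by
  intro R
  have hR : R = (‖d1‖ : ℂ) ^ 2 • vecMulVec (fun m => starRingEnd ℂ (ξ m * w m))
      (fun m => ξ m * w m) + (‖d2‖ : ℂ) ^ 2 • 1 := by
    ext m n
    simp only [R, Matrix.add_apply, Matrix.smul_apply, vecMulVec_apply, diagonal_apply, one_apply,
      norm_mul, hξ, one_mul, smul_eq_mul, mul_ite, mul_one, mul_zero, map_mul, ← conj_mul' d1]
    ring
  have htr :
      trace R = (‖d1‖ : ℂ) ^ 2 * (∑ m, ‖w m‖ ^ 2 : ℝ) + (‖d2‖ : ℂ) ^ 2 * Fintype.card ι := by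
    simp only [hR, trace_add, trace_smul, trace_vecMulVec, trace_one, dotProduct, conj_mul',
      norm_mul, hξ, one_mul, ofReal_sum, ofReal_pow, smul_eq_mul]
  rw [conjTranspose_smul, Matrix.smul_mul, Matrix.smul_mul, Matrix.mul_smul, smul_smul,
    RCLike.star_def, conj_mul', htr, hR]
  simp only [Matrix.smul_mul, Matrix.mul_smul, Matrix.add_mul, Matrix.mul_add, Matrix.mul_one,
    smul_add, smul_smul]
  module

lemma norm_ofReal_sqrt_sq {x : ℝ} (hx : 0 ≤ x) : (‖((√x : ℝ) : ℂ)‖ : ℂ) ^ 2 = x := by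
  rw [norm_real, Real.norm_of_nonneg (Real.sqrt_nonneg x), ← ofReal_pow, Real.sq_sqrt hx]

lemma integral_conjTranspose_mul_vecMulVec_mul_apply {Ω ι κ : Type*} [MeasurableSpace Ω]
    {μ : Measure Ω} [Fintype ι] {u : Ω → ι → ℂ} {A : Ω → Matrix ι κ ℂ}
    (hind : IndepFun u (fun ω (p : ι × κ) => A ω p.1 p.2) μ)
    (hu : ∀ m, MemLp (fun ω => u ω m) 2 μ) (hA : ∀ m i, MemLp (fun ω => A ω m i) 2 μ)
    (i j : κ) :
    ∫ ω, ((A ω)ᴴ * vecMulVec (fun m => starRingEnd ℂ (u ω m)) (u ω) * A ω) i j ∂μ =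
      ∑ m, ∑ n, (∫ ω, starRingEnd ℂ (A ω m i) * A ω n j ∂μ) *
        ∫ ω, starRingEnd ℂ (u ω m) * u ω n ∂μ := by
  have hfactor : ∀ m n, IndepFun (fun ω => starRingEnd ℂ (A ω m i) * A ω n j)
      (fun ω => starRingEnd ℂ (u ω m) * u ω n) μ := fun m n =>
    hind.symm.comp (show Measurable fun x : ι × κ → ℂ => starRingEnd ℂ (x (m, i)) * x (n, j)
      by fun_prop) (show Measurable fun x : ι → ℂ => starRingEnd ℂ (x m) * x n by fun_prop)
  have hA2 : ∀ m n, Integrable (fun ω => starRingEnd ℂ (A ω m i) * A ω n j) μ := fun m n =>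
    (hA m i).star.integrable_mul (hA n j)
  have hu2 : ∀ m n, Integrable (fun ω => starRingEnd ℂ (u ω m) * u ω n) μ := fun m n =>
    (hu m).star.integrable_mul (hu n)
  have hint : ∀ m n, Integrable (fun ω => starRingEnd ℂ (A ω m i) * A ω n j *
      (starRingEnd ℂ (u ω m) * u ω n)) μ := fun m n =>
    (hfactor m n).integrable_mul (hA2 m n) (hu2 m n)
  simp_rw [conjTranspose_mul_vecMulVec_mul_apply]
  rw [integral_finsetSum _ fun m _ => integrable_finsetSum _ fun n _ => hint m n]
  refine Finset.sum_congr rfl fun m _ => ?_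
  rw [integral_finsetSum _ fun n _ => hint m n]
  exact Finset.sum_congr rfl fun n _ => (hfactor m n).integral_fun_mul_eq_mul_integral
    (hA2 m n).aestronglyMeasurable (hu2 m n).aestronglyMeasurable

theorem integral_conjTranspose_mul_vecMulVec_mul_of_affine {Ω ι κ : Type*} [MeasurableSpace Ω]
    {μ : Measure Ω} [IsProbabilityMeasure μ] [Fintype ι] [DecidableEq ι] [Fintype κ]
    [DecidableEq κ] {Z : ι ⊕ ι × κ → Ω → ℂ} (hZ : ∀ k, IsStdComplexRV μ (Z k))
    (hind : iIndepFun Z μ) {u : Ω → ι → ℂ} {A : Ω → Matrix ι κ ℂ} (ubar s : ι → ℂ)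
    (Abar : Matrix ι κ ℂ) (t : ℂ) (hu : ∀ m ω, u ω m = ubar m + s m * Z (.inl m) ω)
    (hA : ∀ m i ω, A ω m i = Abar m i + t * Z (.inr (m, i)) ω) :
    (Matrix.of fun i j =>
        ∫ ω, ((A ω)ᴴ * vecMulVec (fun m => starRingEnd ℂ (u ω m)) (u ω) * A ω) i j ∂μ) =
      let R := vecMulVec (fun m => starRingEnd ℂ (ubar m)) ubar +
        diagonal fun m => (‖s m‖ : ℂ) ^ 2
      Abarᴴ * R * Abar + ((‖t‖ : ℂ) ^ 2 * trace R) • 1 := by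
  have hA' : ∀ (p : ι × κ) ω, A ω p.1 p.2 = Abar p.1 p.2 + t * Z (.inr p) ω :=
    fun p => hA p.1 p.2
  have hZl : ∀ m, IsStdComplexRV μ (Z (.inl m)) := fun m => hZ _
  have hZr : ∀ p, IsStdComplexRV μ (Z (.inr p)) := fun p => hZ _
  have hsplit : IndepFun u (fun ω (p : ι × κ) => A ω p.1 p.2) μ := by
    have h := (hind.indepFun_inl_inr fun k => (hZ k).1).comp
      (show Measurable fun x : ι → ℂ => fun m => ubar m + s m * x m by fun_prop)
      (show Measurable fun y : ι × κ → ℂ => fun p => Abar p.1 p.2 + t * y p by fun_prop)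
    convert h using 1 <;> ext ω x
    · exact hu x ω
    · exact hA' x ω
  ext i j
  rw [of_apply, integral_conjTranspose_mul_vecMulVec_mul_apply hsplit
    (fun m => (hZl m).memLp_two_of_eq_affine (hu m))
    (fun m i => (hZr (m, i)).memLp_two_of_eq_affine (hA m i))]
  set R := vecMulVec (fun m => starRingEnd ℂ (ubar m)) ubar + diagonal fun m => (‖s m‖ : ℂ) ^ 2
  have hEu : ∀ m n, ∫ ω, starRingEnd ℂ (u ω m) * u ω n ∂μ = R m n := fun m n => by
    rw [integral_conj_mul_of_eq_affine hZl (hind.precomp Sum.inl_injective)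
      (Y := fun m ω => u ω m) hu]
    simp [R, vecMulVec_apply, diagonal_apply]
  have hEA : ∀ m i n j, ∫ ω, starRingEnd ℂ (A ω m i) * A ω n j ∂μ =
      starRingEnd ℂ (Abar m i) * Abar n j + if (m, i) = (n, j) then (‖t‖ : ℂ) ^ 2 else 0 :=
    fun m i n j => integral_conj_mul_of_eq_affine hZr (hind.precomp Sum.inr_injective)
      (Y := fun p ω => A ω p.1 p.2) hA' (m, i) (n, j)
  simp only [hEA, hEu, sum_sum_conj_mul_add_ite_mul]
  simp [one_apply]

theorem quadratic_cascaded_term_expectation_general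
    {Ω : Type*} [MeasurableSpace Ω] (μ : Measure Ω) [IsProbabilityMeasure μ]
    (N M : ℕ)
    (htil2 : Ω → Fin M → ℂ) (Htil1 : Ω → Matrix (Fin M) (Fin N) ℂ)
    (hstd : ∀ k, IsStdComplexRV μ (rvFamily2 htil2 Htil1 k))
    (hindep : iIndepFun (rvFamily2 htil2 Htil1) μ)
    (hbar2 : Fin M → ℂ) (hhbar2 : ∑ m, ‖hbar2 m‖ ^ 2 = (M : ℝ))
    (a : Fin M → ℂ) (b : Fin N → ℂ) (ha : ∑ m, ‖a m‖ ^ 2 = (M : ℝ))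
    (Hbar1 : Matrix (Fin M) (Fin N) ℂ)
    (hHbar1 : Hbar1 = Matrix.vecMulVec a (fun j => (starRingEnd ℂ) (b j)))
    (ξ : Fin M → ℂ) (hξ : ∀ m, ‖ξ m‖ = 1)
    (Ξ : Matrix (Fin M) (Fin M) ℂ) (hΞ : Ξ = Matrix.diagonal ξ)
    (δ1 δ2 : ℝ) (hδ1 : 0 < δ1) (hδ2 : 0 < δ2)
    (κ1 κ2 : ℝ) (hκ1 : 0 ≤ κ1) (hκ2 : 0 ≤ κ2)
    (H1 : Ω → Matrix (Fin M) (Fin N) ℂ)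
    (hH1 : ∀ ω, H1 ω =
      (Real.sqrt (δ1 * κ1 / (1 + κ1)) : ℂ) • Hbar1
        + (Real.sqrt (δ1 / (1 + κ1)) : ℂ) • Htil1 ω)
    (h2 : Ω → Fin M → ℂ)
    (hh2 : ∀ ω m, h2 ω m =
      (Real.sqrt (δ2 * κ2 / (1 + κ2)) : ℂ) * hbar2 m
        + (Real.sqrt (δ2 / (1 + κ2)) : ℂ) * htil2 ω m) :
    (Matrix.of fun i j : Fin N =>
        ∫ ω, ((H1 ω)ᴴ * Ξ.map (starRingEnd ℂ)
            * Matrix.vecMulVec (fun m => (starRingEnd ℂ) (h2 ω m)) (h2 ω)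
            * Ξ * H1 ω) i j ∂μ) =
      ((M * δ1 * δ2 / (1 + κ1) : ℝ) : ℂ) • (1 : Matrix (Fin N) (Fin N) ℂ)
        + ((M * δ1 * δ2 * κ1 / ((1 + κ1) * (1 + κ2)) : ℝ) : ℂ) •
            Matrix.vecMulVec b (fun j => (starRingEnd ℂ) (b j))
        + ((δ1 * δ2 * κ1 * κ2 / ((1 + κ1) * (1 + κ2)) : ℝ) : ℂ) •
            (Hbar1ᴴ * Ξ.map (starRingEnd ℂ)
              * Matrix.vecMulVec (fun m => (starRingEnd ℂ) (hbar2 m)) hbar2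
              * Ξ * Hbar1) := by
  subst hΞ
  simp_rw [conjTranspose_mul_diagonal_map_conj_mul_vecMulVec_mul_diagonal_mul]
  rw [integral_conjTranspose_mul_vecMulVec_mul_of_affine hstd hindep
      (fun m => ξ m * ((Real.sqrt (δ2 * κ2 / (1 + κ2)) : ℂ) * hbar2 m))
      (fun m => ξ m * (Real.sqrt (δ2 / (1 + κ2)) : ℂ))
      ((Real.sqrt (δ1 * κ1 / (1 + κ1)) : ℂ) • Hbar1) (Real.sqrt (δ1 / (1 + κ1)) : ℂ)
      (fun m ω => by simp only [hh2, rvFamily2]; ring)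
      (fun m i ω => by simp [hH1, rvFamily2]),
    conjTranspose_smul_mul_mul_smul_add_trace Hbar1 hξ, hHbar1,
    conjTranspose_vecMulVec_mul_vecMulVec, ha]
  simp only [hhbar2, Fintype.card_fin, smul_smul]
  rw [norm_ofReal_sqrt_sq (by positivity), norm_ofReal_sqrt_sq (by positivity),
    norm_ofReal_sqrt_sq (by positivity), norm_ofReal_sqrt_sq (by positivity)]
  have h1κ1 : 1 + κ1 ≠ 0 := by positivity
  have h1κ2 : 1 + κ2 ≠ 0 := by positivity
  congr 3 <;> norm_cast <;> field_simp
  ring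

/-- the quadratic cascaded-channel term
`E[H₁ᴴ Ξ* h₂* h₂ᵀ Ξ H₁]` with `H̄₁ = a bᴴ`, `‖a‖² = ‖h̄₂‖² = M`, and unit-modulus
diagonal `Ξ`, equals
`(M δ₁δ₂/(1+κ₁)) I_N + (M δ₁δ₂κ₁/((1+κ₁)(1+κ₂))) b bᴴ
  + (δ₁δ₂κ₁κ₂/((1+κ₁)(1+κ₂))) H̄₁ᴴ Ξ* h̄₂* h̄₂ᵀ Ξ H̄₁`. -/
theorem quadratic_cascaded_term_expectation
    {Ω : Type*} [MeasurableSpace Ω] (μ : Measure Ω) [IsProbabilityMeasure μ]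
    (N M : ℕ) (hN : 1 ≤ N) (hM : 1 ≤ M)
    (htil2 : Ω → Fin M → ℂ) (Htil1 : Ω → Matrix (Fin M) (Fin N) ℂ)
    (hstd : ∀ k, IsStdComplexRV μ (rvFamily2 htil2 Htil1 k))
    (hindep : iIndepFun (rvFamily2 htil2 Htil1) μ)
    (hbar2 : Fin M → ℂ) (hhbar2 : ∑ m, ‖hbar2 m‖ ^ 2 = (M : ℝ))
    (a : Fin M → ℂ) (b : Fin N → ℂ) (ha : ∑ m, ‖a m‖ ^ 2 = (M : ℝ))
    (Hbar1 : Matrix (Fin M) (Fin N) ℂ)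
    (hHbar1 : Hbar1 = Matrix.vecMulVec a (fun j => (starRingEnd ℂ) (b j)))
    (ξ : Fin M → ℂ) (hξ : ∀ m, ‖ξ m‖ = 1)
    (Ξ : Matrix (Fin M) (Fin M) ℂ) (hΞ : Ξ = Matrix.diagonal ξ)
    (δ1 δ2 : ℝ) (hδ1 : 0 < δ1) (hδ2 : 0 < δ2)
    (κ1 κ2 : ℝ) (hκ1 : 0 ≤ κ1) (hκ2 : 0 ≤ κ2)
    (H1 : Ω → Matrix (Fin M) (Fin N) ℂ)
    (hH1 : ∀ ω, H1 ω =
      (Real.sqrt (δ1 * κ1 / (1 + κ1)) : ℂ) • Hbar1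
        + (Real.sqrt (δ1 / (1 + κ1)) : ℂ) • Htil1 ω)
    (h2 : Ω → Fin M → ℂ)
    (hh2 : ∀ ω m, h2 ω m =
      (Real.sqrt (δ2 * κ2 / (1 + κ2)) : ℂ) * hbar2 m
        + (Real.sqrt (δ2 / (1 + κ2)) : ℂ) * htil2 ω m) :
    (Matrix.of fun i j : Fin N =>
        ∫ ω, ((H1 ω)ᴴ * Ξ.map (starRingEnd ℂ)
            * Matrix.vecMulVec (fun m => (starRingEnd ℂ) (h2 ω m)) (h2 ω)
            * Ξ * H1 ω) i j ∂μ) =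
      ((M * δ1 * δ2 / (1 + κ1) : ℝ) : ℂ) • (1 : Matrix (Fin N) (Fin N) ℂ)
        + ((M * δ1 * δ2 * κ1 / ((1 + κ1) * (1 + κ2)) : ℝ) : ℂ) •
            Matrix.vecMulVec b (fun j => (starRingEnd ℂ) (b j))
        + ((δ1 * δ2 * κ1 * κ2 / ((1 + κ1) * (1 + κ2)) : ℝ) : ℂ) •
            (Hbar1ᴴ * Ξ.map (starRingEnd ℂ)
              * Matrix.vecMulVec (fun m => (starRingEnd ℂ) (hbar2 m)) hbar2
              * Ξ * Hbar1) :=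
  quadratic_cascaded_term_expectation_general μ N M htil2 Htil1 hstd hindep hbar2 hhbar2 a b ha
    Hbar1 hHbar1 ξ hξ Ξ hΞ δ1 δ2 hδ1 hδ2 κ1 κ2 hκ1 hκ2 H1 hH1 h2 hh2

end
end
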